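/- arXiv:1706.04848 — 4 statements merged into one kernel-verified Lean document; each statement's English description precedes it below -/
import Mathlib

section
/- Let N be a natural number, ε ∈ (0,1), and let λ_1,…,λ_N ∈ [0,1]. Set S = Σ_{k=1}^N λ_k and g = Σ_{k=1}^N (λ_k − λ_k²). Then the number of indices k with λ_k ≥ 1−ε is at least S − g/ε, and the number of indices k with λ_k > ε is at most S + g/ε. -/
/-!
Each term `λ - λ²` is a nonnegative "distance from `{0, 1}`", and it is large wherever `λ` is far
from both `0` and `1`: if `λ < 1 - ε` then `ε λ ≤ λ - λ²`, and if `λ > ε` then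
`ε (1 - λ) ≤ λ - λ²`. Hence pointwise `λ - (λ - λ²)/ε ≤ [λ ≥ 1 - ε]` and
`[λ > ε] ≤ λ + (λ - λ²)/ε`; summing over the indices gives both bounds.
-/

open Finset

section Pointwise

variable {x ε : ℝ}

lemma sub_sq_nonneg_of_mem_Icc (hx : x ∈ Set.Icc (0 : ℝ) 1) : 0 ≤ x - x ^ 2 := by
  nlinarith [hx.1, hx.2]

lemma sub_sub_sq_div_le_ite_one_sub_le (hx : x ∈ Set.Icc (0 : ℝ) 1) (hε : 0 < ε) :
    x - (x - x ^ 2) / ε ≤ if 1 - ε ≤ x then 1 else 0 := by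
  split_ifs with h
  · linarith [hx.2, div_nonneg (sub_sq_nonneg_of_mem_Icc hx) hε.le]
  · have hdev : x * ε ≤ x - x ^ 2 := by nlinarith [hx.1]
    rw [sub_nonpos, le_div_iff₀ hε]
    exact hdev

lemma ite_lt_le_add_sub_sq_div (hx : x ∈ Set.Icc (0 : ℝ) 1) (hε : 0 < ε) :
    (if ε < x then 1 else 0) ≤ x + (x - x ^ 2) / ε := by
  split_ifs with h
  · have hdev : (1 - x) * ε ≤ x - x ^ 2 := by nlinarith [hx.2]
    linarith [(le_div_iff₀ hε).mpr hdev]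
  · linarith [hx.1, div_nonneg (sub_sq_nonneg_of_mem_Icc hx) hε.le]

end Pointwise

section Counting

variable {ι : Type*} {s : Finset ι} {f : ι → ℝ} {ε : ℝ}

theorem sum_sub_sum_sub_sq_div_le_card_filter_one_sub_le
    (hf : ∀ i ∈ s, f i ∈ Set.Icc (0 : ℝ) 1) (hε : 0 < ε) :
    (∑ i ∈ s, f i) - (∑ i ∈ s, (f i - f i ^ 2)) / ε ≤ (#{i ∈ s | 1 - ε ≤ f i} : ℝ) :=
  calc (∑ i ∈ s, f i) - (∑ i ∈ s, (f i - f i ^ 2)) / ε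
      = ∑ i ∈ s, (f i - (f i - f i ^ 2) / ε) := by rw [eq_comm, sum_sub_distrib, ← sum_div]
    _ ≤ ∑ i ∈ s, if 1 - ε ≤ f i then (1 : ℝ) else 0 :=
      sum_le_sum fun i hi => sub_sub_sq_div_le_ite_one_sub_le (hf i hi) hε
    _ = #{i ∈ s | 1 - ε ≤ f i} := by rw [sum_boole]

theorem card_filter_lt_le_sum_add_sum_sub_sq_div
    (hf : ∀ i ∈ s, f i ∈ Set.Icc (0 : ℝ) 1) (hε : 0 < ε) :
    (#{i ∈ s | ε < f i} : ℝ) ≤ (∑ i ∈ s, f i) + (∑ i ∈ s, (f i - f i ^ 2)) / ε :=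
  calc (#{i ∈ s | ε < f i} : ℝ)
      = ∑ i ∈ s, if ε < f i then (1 : ℝ) else 0 := by rw [sum_boole]
    _ ≤ ∑ i ∈ s, (f i + (f i - f i ^ 2) / ε) :=
      sum_le_sum fun i hi => ite_lt_le_add_sub_sq_div (hf i hi) hε
    _ = (∑ i ∈ s, f i) + (∑ i ∈ s, (f i - f i ^ 2)) / ε := by rw [sum_add_distrib, ← sum_div]

end Counting

/-- Let `N : ℕ`, `ε ∈ (0,1)`, and `λ_1,…,λ_N ∈ [0,1]`.
Set `S = Σ λ_k` and `g = Σ (λ_k − λ_k²)`. Then the number of indices with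
`λ_k ≥ 1−ε` is at least `S − g/ε`, and the number of indices with `λ_k > ε`
is at most `S + g/ε`. -/
theorem stmt0 (N : ℕ) (ε : ℝ) (hε : ε ∈ Set.Ioo (0 : ℝ) 1)
    (lam : Fin N → ℝ) (hlam : ∀ k, lam k ∈ Set.Icc (0 : ℝ) 1) :
    (∑ k, lam k) - (∑ k, (lam k - (lam k) ^ 2)) / ε ≤
        ((Finset.univ.filter (fun k => 1 - ε ≤ lam k)).card : ℝ) ∧
      ((Finset.univ.filter (fun k => ε < lam k)).card : ℝ) ≤
        (∑ k, lam k) + (∑ k, (lam k - (lam k) ^ 2)) / ε :=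
  ⟨sum_sub_sum_sub_sq_div_le_card_filter_one_sub_le (fun k _ => hlam k) hε.1,
    card_filter_lt_le_sum_add_sum_sub_sq_div (fun k _ => hlam k) hε.1⟩
end

section
/- Let S ⊆ ℤ² be a finite set. Then for every point k ∈ S \ S̄_1, the boundary distance of k with respect to S \ S̄_1 equals its boundary distance with respect to S, i.e., d(k; S \ S̄_1) = d(k; S). -/
/-- The Chebyshev (`l∞`) distance between two grid points of `ℤ²`. -/
def chebDist (k l : ℤ × ℤ) : ℕ := max (k.1 - l.1).natAbs (k.2 - l.2).natAbs

/-- The `l∞` boundary distance of `k` with respect to a set `P ⊆ ℤ²`: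
the minimal `l∞` distance from `k` to a point outside `P`. -/
noncomputable def bdist (P : Set (ℤ × ℤ)) (k : ℤ × ℤ) : ℕ :=
  sInf {n | ∃ l ∉ P, chebDist k l = n}

/-- The `i`-th distance layer `S_i = {k ∈ P : d(k;P) = i}`. -/
def layer (P : Set (ℤ × ℤ)) (i : ℕ) : Set (ℤ × ℤ) :=
  {k ∈ P | bdist P k = i}

/-- `S̄_i`: the points of `S_i` all of whose 8 neighbours `l` satisfy `d(l;P) ≤ i`. -/
def layerBar (P : Set (ℤ × ℤ)) (i : ℕ) : Set (ℤ × ℤ) :=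
  {k ∈ layer P i | ∀ l, chebDist k l = 1 → bdist P l ≤ i}

/-!
Removing `S̄_1` can only lower boundary distances, so it suffices to see that a removed point
`l` is never closer to a remaining point `k` than the nearest point outside `S`. Stepping from
`l` one unit towards `k` reaches a neighbour `l'` of `l` with `d(k,l') = d(k,l) - 1`, and
`d(l';S) ≤ 1` since `l ∈ S̄_1`; as `d(·;S)` is `1`-Lipschitz, `d(k;S) ≤ d(k,l') + 1 = d(k,l)`.
-/

lemma chebDist_triangle (k l m : ℤ × ℤ) : chebDist k m ≤ chebDist k l + chebDist l m := by
  simp only [chebDist]; omega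

lemma Int.sign_cases (d : ℤ) :
    (d < 0 ∧ d.sign = -1) ∨ (d = 0 ∧ d.sign = 0) ∨ (0 < d ∧ d.sign = 1) := by
  rcases lt_trichotomy d 0 with h | h | h
  · exact .inl ⟨h, Int.sign_eq_neg_one_of_neg h⟩
  · exact .inr (.inl ⟨h, by simp [h]⟩)
  · exact .inr (.inr ⟨h, Int.sign_eq_one_of_pos h⟩)

lemma exists_chebDist_eq_one_and_chebDist_add_one_eq {k l : ℤ × ℤ} (hkl : k ≠ l) :
    ∃ l', chebDist l l' = 1 ∧ chebDist k l' + 1 = chebDist k l := by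
  refine ⟨(l.1 + (k.1 - l.1).sign, l.2 + (k.2 - l.2).sign), ?_⟩
  have hne : k.1 ≠ l.1 ∨ k.2 ≠ l.2 := by
    by_contra! h
    exact hkl (Prod.ext h.1 h.2)
  simp only [chebDist]
  rcases (k.1 - l.1).sign_cases with ⟨_, h1⟩ | ⟨_, h1⟩ | ⟨_, h1⟩ <;>
  rcases (k.2 - l.2).sign_cases with ⟨_, h2⟩ | ⟨_, h2⟩ | ⟨_, h2⟩ <;>
  · rw [h1, h2]; omega

section bdist

variable {P Q : Set (ℤ × ℤ)}

lemma bdist_le {l : ℤ × ℤ} (hl : l ∉ P) (k : ℤ × ℤ) : bdist P k ≤ chebDist k l :=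
  Nat.sInf_le ⟨l, hl, rfl⟩

lemma le_bdist (hP : Pᶜ.Nonempty) {k : ℤ × ℤ} {n : ℕ} (h : ∀ l ∉ P, n ≤ chebDist k l) :
    n ≤ bdist P k := by
  obtain ⟨l, hl⟩ := hP
  refine le_csInf ⟨chebDist k l, l, hl, rfl⟩ ?_
  rintro _ ⟨m, hm, rfl⟩
  exact h m hm

lemma exists_chebDist_eq_bdist (hP : Pᶜ.Nonempty) (k : ℤ × ℤ) :
    ∃ l ∉ P, chebDist k l = bdist P k := by
  obtain ⟨l, hl⟩ := hP
  exact Nat.sInf_mem (s := {n | ∃ l ∉ P, chebDist k l = n}) ⟨chebDist k l, l, hl, rfl⟩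

lemma bdist_mono (hPQ : P ⊆ Q) (hQ : Qᶜ.Nonempty) (k : ℤ × ℤ) : bdist P k ≤ bdist Q k := by
  obtain ⟨l, hl, hkl⟩ := exists_chebDist_eq_bdist hQ k
  exact hkl ▸ bdist_le (fun h ↦ hl (hPQ h)) k

lemma bdist_le_chebDist_add (hP : Pᶜ.Nonempty) (k l : ℤ × ℤ) :
    bdist P k ≤ chebDist k l + bdist P l := by
  obtain ⟨m, hm, hlm⟩ := exists_chebDist_eq_bdist hP l
  calc bdist P k ≤ chebDist k m := bdist_le hm k
    _ ≤ chebDist k l + chebDist l m := chebDist_triangle k l m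
    _ = chebDist k l + bdist P l := by rw [hlm]

lemma bdist_add_one_le_of_forall_neighbour_le (hP : Pᶜ.Nonempty) {k l : ℤ × ℤ} (hkl : k ≠ l)
    {i : ℕ} (hl : ∀ l', chebDist l l' = 1 → bdist P l' ≤ i) :
    bdist P k + 1 ≤ chebDist k l + i := by
  obtain ⟨l', hll', hkl'⟩ := exists_chebDist_eq_one_and_chebDist_add_one_eq hkl
  have := bdist_le_chebDist_add hP k l'
  have := hl l' hll'
  omega

end bdist

/-- For a finite `S ⊆ ℤ²`, removing `S̄_1` preserves the boundary
distance of every remaining point: `d(k; S \ S̄_1) = d(k; S)` for `k ∈ S \ S̄_1`. -/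
theorem stmt3 (S : Set (ℤ × ℤ)) (hS : S.Finite) :
    ∀ k ∈ S \ layerBar S 1, bdist (S \ layerBar S 1) k = bdist S k := by
  intro k hk
  have hSc : Sᶜ.Nonempty := hS.infinite_compl.nonempty
  have hTc : (S \ layerBar S 1)ᶜ.Nonempty := hSc.mono (Set.compl_subset_compl.2 Set.sdiff_subset)
  refine le_antisymm (bdist_mono Set.sdiff_subset hSc k) (le_bdist hTc fun l hl ↦ ?_)
  by_cases hlS : l ∈ S
  · have hlS₁ : l ∈ layerBar S 1 := by_contra fun h ↦ hl ⟨hlS, h⟩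
    have hkl : k ≠ l := fun h ↦ hk.2 (h ▸ hlS₁)
    have := bdist_add_one_le_of_forall_neighbour_le hSc hkl hlS₁.2
    omega
  · exact bdist_le hlS k
end

section
/- Let n_R, n_Λ be positive integers with n_Λ ≤ n_R, and set γ = n_R/n_Λ. Then for every integer q with 1 ≤ q ≤ n_R/2, the Dirichlet kernel tail sum satisfies Σ_{k=q}^{n_R−q} ( sin(π n_Λ k/n_R) / (n_R sin(π k/n_R)) )² < 1/(4q) + γ/(16 q²). -/
/-!
With `ζ = exp(2πi/n_R)` and `D_k = ∑_{j<n_Λ} ζ^{jk}`, the summand is `|D_k|² / n_R²`.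
Orthogonality of the `n_R`-th roots of unity, applied to `ζ^{j-j'}` with `|j - j'| < n_R`, gives
`∑_{k<n_R} |D_k|² = n_Λ n_R`; removing `D_0 = n_Λ`, the sum over `1 ≤ k ≤ n_R - 1` is `x - x²`
with `x = n_Λ/n_R`, at most `1/4`. This is the case `q = 1`.

For `q ≥ 2` bound the numerator by `1`. Since `1/sin²` is dominated by the difference quotient of
`-cot` over `[c - h, c + h]`, with `h = π/(2n_R)` the sum telescopes to at most
`(2/(π n_R)) cot(π(2q-1)/(2n_R)) ≤ 4/(π²(2q-1))`, which is below `1/(4q) + 1/(16q²)` as `π² > 9.8`.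
-/

open Real Finset ComplexConjugate

lemma IsPrimitiveRoot.geom_sum_pow_div_pow_eq_ite {K : Type*} [Field K] {ζ : K} {N i j : ℕ}
    (hζ : IsPrimitiveRoot ζ N) (hi : i < N) (hj : j < N) :
    ∑ k ∈ range N, (ζ ^ i / ζ ^ j) ^ k = if i = j then (N : K) else 0 := by
  have hζ0 : ζ ≠ 0 := hζ.ne_zero (by omega)
  split_ifs with hij
  · simp [hij, hζ0]
  · have hne : ζ ^ i / ζ ^ j ≠ 1 := by
      rw [Ne, div_eq_one_iff_eq (pow_ne_zero _ hζ0)]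
      exact fun h => hij (hζ.pow_inj hi hj h)
    have hpow : (ζ ^ i / ζ ^ j) ^ N = 1 := by
      rw [div_pow, ← pow_mul, ← pow_mul, pow_mul', pow_mul', hζ.pow_eq_one, one_pow, one_pow,
        div_one]
    rw [geom_sum_eq hne, hpow, sub_self, zero_div]

lemma IsPrimitiveRoot.sum_norm_geom_sum_pow_sq {ζ : ℂ} {N L : ℕ} (hζ : IsPrimitiveRoot ζ N)
    (hL : L ≤ N) : ∑ k ∈ range N, ‖∑ j ∈ range L, (ζ ^ k) ^ j‖ ^ 2 = L * N := by
  rcases Nat.eq_zero_or_pos N with rfl | hN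
  · simp [Nat.le_zero.1 hL]
  have hconj (m : ℕ) : conj (ζ ^ m) = (ζ ^ m)⁻¹ :=
    (Complex.inv_eq_conj (by simp [hζ.norm'_eq_one hN.ne'])).symm
  apply Complex.ofReal_injective
  push_cast
  calc ∑ k ∈ range N, ((‖∑ j ∈ range L, (ζ ^ k) ^ j‖ : ℂ)) ^ 2
      = ∑ k ∈ range N, ∑ i ∈ range L, ∑ j ∈ range L, (ζ ^ i / ζ ^ j) ^ k := by
        refine sum_congr rfl fun k _ => ?_
        rw [← Complex.mul_conj', map_sum, sum_mul_sum]
        refine sum_congr rfl fun i _ => sum_congr rfl fun j _ => ?_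
        rw [← pow_mul, ← pow_mul, hconj, div_pow, ← pow_mul, ← pow_mul, mul_comm i, mul_comm j,
          div_eq_mul_inv]
    _ = ∑ i ∈ range L, ∑ j ∈ range L, if i = j then (N : ℂ) else 0 := by
        rw [sum_comm]
        refine sum_congr rfl fun i hi => ?_
        rw [sum_comm]
        exact sum_congr rfl fun j hj => hζ.geom_sum_pow_div_pow_eq_ite
          ((mem_range.1 hi).trans_le hL) ((mem_range.1 hj).trans_le hL)
    _ = L * N := by simp +contextual

lemma Complex.norm_geom_sum_exp_mul_I_sq (L : ℕ) {θ : ℝ} (hθ : Real.sin (θ / 2) ≠ 0) :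
    ‖∑ j ∈ range L, Complex.exp (I * θ) ^ j‖ ^ 2 =
      Real.sin (L * θ / 2) ^ 2 / Real.sin (θ / 2) ^ 2 := by
  have hne : Complex.exp (I * θ) ≠ 1 := by
    rw [Ne, ← sub_eq_zero, ← norm_eq_zero, norm_exp_I_mul_ofReal_sub_one]
    simpa using hθ
  rw [geom_sum_eq hne, ← Complex.exp_nat_mul, norm_div, ← mul_assoc, mul_comm _ I, mul_assoc]
  rw [← ofReal_natCast, ← ofReal_mul, norm_exp_I_mul_ofReal_sub_one, norm_exp_I_mul_ofReal_sub_one]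
  simp only [norm_mul, Real.norm_eq_abs, div_pow, mul_pow, sq_abs]
  exact mul_div_mul_left _ _ (by norm_num)

lemma Real.mul_cos_le_sin {x : ℝ} (h0 : 0 ≤ x) (h1 : x ≤ π) : x * cos x ≤ sin x := by
  rcases lt_or_ge x (π / 2) with h | h
  · have hc : 0 < cos x := cos_pos_of_mem_Ioo ⟨by linarith [pi_pos], h⟩
    have := le_tan h0 h
    rwa [tan_eq_sin_div_cos, le_div_iff₀ hc] at this
  · have hc : cos x ≤ 0 := cos_nonpos_of_pi_div_two_le_of_le h (by linarith [pi_pos])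
    nlinarith [sin_nonneg_of_nonneg_of_le_pi h0 h1]

lemma Real.cot_le_inv {x : ℝ} (h0 : 0 < x) (h1 : x < π) : cot x ≤ x⁻¹ := by
  rw [cot_eq_cos_div_sin, div_le_iff₀ (sin_pos_of_pos_of_lt_pi h0 h1), le_inv_mul_iff₀ h0]
  exact mul_cos_le_sin h0.le h1.le

lemma Real.two_mul_div_sin_sq_le_cot_sub_cot {c h : ℝ} (hh : 0 < h) (hch : 0 < c - h)
    (hc : c + h < π) : 2 * h / sin c ^ 2 ≤ cot (c - h) - cot (c + h) := by
  have hs₁ : 0 < sin (c - h) := sin_pos_of_pos_of_lt_pi hch (by linarith)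
  have hs₂ : 0 < sin (c + h) := sin_pos_of_pos_of_lt_pi (by linarith) hc
  have hsc : 0 < sin c := sin_pos_of_pos_of_lt_pi (by linarith) (by linarith)
  have hcos : 0 ≤ cos h := cos_nonneg_of_mem_Icc ⟨by linarith, by linarith⟩
  have hden : sin (c - h) * sin (c + h) = sin c ^ 2 - sin h ^ 2 := by
    rw [sin_sub, sin_add]; nlinarith [sin_sq_add_cos_sq c, sin_sq_add_cos_sq h]
  have hnum : cos (c - h) * sin (c + h) - sin (c - h) * cos (c + h) = sin (2 * h) := by
    rw [show 2 * h = (c + h) - (c - h) by ring, sin_sub (c + h) (c - h)]; ring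
  rw [cot_eq_cos_div_sin, cot_eq_cos_div_sin, div_sub_div _ _ hs₁.ne' hs₂.ne', hnum, hden,
    sin_two_mul, div_le_div_iff₀ (by positivity) (by nlinarith)]
  nlinarith [mul_nonneg (sub_nonneg.2 (mul_cos_le_sin hh.le (by linarith : h ≤ π)))
      (mul_nonneg hcos (sq_nonneg (sin c))),
    mul_nonneg (mul_nonneg hh.le (sq_nonneg (sin h))) (sub_nonneg.2 (sin_sq_le_one c)),
    congrArg (h * sin c ^ 2 * ·) (sin_sq_add_cos_sq h)]

lemma one_div_sq_mul_sin_le_cot_sub_cot {N x : ℝ} (hx : 1 < 2 * x) (hxN : 2 * x + 1 < 2 * N) :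
    1 / (N * sin (π * x / N)) ^ 2 ≤
      (cot (π * (2 * x - 1) / (2 * N)) - cot (π * (2 * x + 1) / (2 * N))) / (π * N) := by
  have hN : 0 < N := by linarith
  have hpi := pi_pos
  have e₁ : π * x / N - π / (2 * N) = π * (2 * x - 1) / (2 * N) := by field_simp
  have e₂ : π * x / N + π / (2 * N) = π * (2 * x + 1) / (2 * N) := by field_simp
  have key := two_mul_div_sin_sq_le_cot_sub_cot (c := π * x / N) (h := π / (2 * N))
    (by positivity) (by rw [e₁]; apply div_pos <;> nlinarith)
    (by rw [e₂, div_lt_iff₀ (by positivity)]; nlinarith)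
  rw [e₁, e₂] at key
  calc 1 / (N * sin (π * x / N)) ^ 2 = 2 * (π / (2 * N)) / sin (π * x / N) ^ 2 / (π * N) := by
        field_simp
    _ ≤ _ := by gcongr

lemma sum_Icc_one_div_sq_mul_sin_le {N q : ℕ} (hq : 1 ≤ q) (hqN : 2 * q ≤ N) :
    ∑ k ∈ Icc q (N - q), 1 / ((N : ℝ) * sin (π * k / N)) ^ 2 ≤ 4 / (π ^ 2 * (2 * q - 1)) := by
  have hN : (0 : ℝ) < N := by exact_mod_cast (by omega : 0 < N)
  have hq' : (1 : ℝ) ≤ q := by exact_mod_cast hq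
  have hqN' : 2 * (q : ℝ) ≤ N := by exact_mod_cast hqN
  have hpi := pi_pos
  set F : ℕ → ℝ := fun k => cot (π * (2 * k - 1) / (2 * N)) with hF
  have hterm : ∀ k ∈ Icc q (N - q), 1 / ((N : ℝ) * sin (π * k / N)) ^ 2 ≤
      (F k - F (k + 1)) / (π * N) := by
    intro k hk
    have hk1 : (1 : ℝ) ≤ k := by exact_mod_cast hq.trans (mem_Icc.1 hk).1
    have hkN : (k : ℝ) + 1 ≤ N := by
      have := (mem_Icc.1 hk).2
      exact_mod_cast (by omega : k + 1 ≤ N)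
    have hFsucc : F (k + 1) = cot (π * (2 * k + 1) / (2 * N)) := by
      simp only [hF]; push_cast; ring_nf
    rw [hFsucc]
    exact one_div_sq_mul_sin_le_cot_sub_cot (by linarith) (by linarith)
  have hx0 : 0 < π * (2 * q - 1) / (2 * N) := by apply div_pos <;> nlinarith
  have hx0' : π * (2 * q - 1) / (2 * N) < π := by rw [div_lt_iff₀ (by positivity)]; nlinarith
  have hlast : F (N - q + 1) = - F q := by
    simp only [hF]
    rw [Nat.cast_add, Nat.cast_one, Nat.cast_sub (by omega), cot_eq_cos_div_sin,
      cot_eq_cos_div_sin,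
      show π * (2 * ((N : ℝ) - q + 1) - 1) / (2 * N) = π - π * (2 * q - 1) / (2 * N) by
        field_simp; ring, cos_pi_sub, sin_pi_sub, neg_div]
  calc ∑ k ∈ Icc q (N - q), 1 / ((N : ℝ) * sin (π * k / N)) ^ 2
      ≤ ∑ k ∈ Icc q (N - q), (F k - F (k + 1)) / (π * N) := sum_le_sum hterm
    _ = 2 * F q / (π * N) := by
        rw [← sum_div]
        simp only [← neg_sub (F (_ + 1)), sum_neg_distrib, sum_Icc_sub (by omega : q ≤ N - q),
          hlast]
        ring
    _ ≤ 2 * (π * (2 * q - 1) / (2 * N))⁻¹ / (π * N) := by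
        gcongr
        exact cot_le_inv hx0 hx0'
    _ = 4 / (π ^ 2 * (2 * q - 1)) := by
        field_simp
        ring

lemma sum_Icc_sq_sin_mul_div_mul_sin {N L : ℕ} (hN : 0 < N) (hL : L ≤ N) :
    ∑ k ∈ Icc 1 (N - 1), (sin (π * L * k / N) / ((N : ℝ) * sin (π * k / N))) ^ 2 =
      L / N - (L / N) ^ 2 := by
  have hN' : (N : ℝ) ≠ 0 := by positivity
  set ζ := Complex.exp (2 * π * Complex.I / N)
  have hζ : IsPrimitiveRoot ζ N := Complex.isPrimitiveRoot_exp N hN.ne'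
  have hpow (k : ℕ) : ζ ^ k = Complex.exp (Complex.I * ↑(2 * π * k / N)) := by
    rw [← Complex.exp_nat_mul]; congr 1; push_cast; ring
  have hterm : ∀ k ∈ Ico 1 N, ‖∑ j ∈ range L, (ζ ^ k) ^ j‖ ^ 2 =
      sin (π * L * k / N) ^ 2 / sin (π * k / N) ^ 2 := by
    intro k hk
    have hk0 : (0 : ℝ) < k := by exact_mod_cast (mem_Ico.1 hk).1
    have hkN : (k : ℝ) < N := by exact_mod_cast (mem_Ico.1 hk).2
    have hsin : 0 < sin (π * k / N) := by
      apply sin_pos_of_pos_of_lt_pi (by positivity)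
      rw [div_lt_iff₀ (by positivity)]
      exact mul_lt_mul_of_pos_left hkN pi_pos
    rw [hpow, Complex.norm_geom_sum_exp_mul_I_sq L (by convert hsin.ne' using 2; ring)]
    congr 3 <;> ring
  have htotal := hζ.sum_norm_geom_sum_pow_sq hL
  rw [range_eq_Ico, sum_eq_sum_Ico_succ_bot hN, sum_congr rfl hterm] at htotal
  have hIcc : Icc 1 (N - 1) = Ico 1 N := by ext; simp; omega
  rw [hIcc]
  calc ∑ k ∈ Ico 1 N, (sin (π * L * k / N) / ((N : ℝ) * sin (π * k / N))) ^ 2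
      = (∑ k ∈ Ico 1 N, sin (π * L * k / N) ^ 2 / sin (π * k / N) ^ 2) / N ^ 2 := by
        rw [sum_div]; exact sum_congr rfl fun k _ => by ring
    _ = L / N - (L / N) ^ 2 := by
        simp only [pow_zero, one_pow, sum_const, card_range, nsmul_eq_mul, mul_one,
          Complex.norm_natCast] at htotal
        rw [eq_sub_of_add_eq' htotal]
        field_simp

lemma four_div_pi_sq_mul_lt {q : ℝ} (hq : 2 ≤ q) :
    4 / (π ^ 2 * (2 * q - 1)) < 1 / (4 * q) + 1 / (16 * q ^ 2) := by
  have hπ : (3.14 : ℝ) ^ 2 < π ^ 2 := pow_lt_pow_left₀ pi_gt_d2 (by norm_num) two_ne_zero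
  rw [div_add_div _ _ (by positivity) (by positivity),
    div_lt_div_iff₀ (by nlinarith) (by positivity)]
  nlinarith [mul_lt_mul_of_pos_right hπ (by nlinarith : (0 : ℝ) < (2 * q - 1) * (4 * q + 1))]

/-- Dirichlet kernel tail bound: for positive integers `n_Λ ≤ n_R`,
`γ = n_R/n_Λ`, and every integer `q` with `1 ≤ q ≤ n_R/2`,
`Σ_{k=q}^{n_R−q} (sin(π n_Λ k/n_R)/(n_R sin(π k/n_R)))² < 1/(4q) + γ/(16q²)`. -/
theorem stmt10 (nR nΛ : ℕ) (hnR : 0 < nR) (hnΛ : 0 < nΛ) (hle : nΛ ≤ nR)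
    (q : ℕ) (hq1 : 1 ≤ q) (hq2 : 2 * q ≤ nR) :
    ∑ k ∈ Finset.Icc q (nR - q),
        (Real.sin (Real.pi * nΛ * k / nR) / ((nR : ℝ) * Real.sin (Real.pi * k / nR))) ^ 2 <
      1 / (4 * (q : ℝ)) + ((nR : ℝ) / (nΛ : ℝ)) / (16 * (q : ℝ) ^ 2) := by
  have hγ : 1 ≤ (nR : ℝ) / nΛ := (one_le_div (Nat.cast_pos.2 hnΛ)).2 (by exact_mod_cast hle)
  rcases hq1.eq_or_lt with rfl | hq
  · rw [sum_Icc_sq_sin_mul_div_mul_sin hnR hle]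
    push_cast
    nlinarith [sq_nonneg ((nΛ : ℝ) / nR - 1 / 2)]
  · calc _ ≤ ∑ k ∈ Icc q (nR - q), 1 / ((nR : ℝ) * sin (π * k / nR)) ^ 2 := by
          gcongr with k
          rw [div_pow]
          gcongr
          exact sin_sq_le_one _
      _ ≤ 4 / (π ^ 2 * (2 * q - 1)) := sum_Icc_one_div_sq_mul_sin_le hq1 hq2
      _ < 1 / (4 * q) + 1 / (16 * q ^ 2) := four_div_pi_sq_mul_lt (by exact_mod_cast hq)
      _ ≤ _ := by gcongr
end

section
/- Let P and Q be orthogonal projection matrices on ℂ^N, and suppose φ_i, φ_j ∈ ℂ^N satisfy Qφ_i = φ_i, Qφ_j = φ_j, and QPQφ_i = λ_i φ_i for a scalar λ_i. Then ⟨Pφ_i, Pφ_j⟩ = λ_i ⟨φ_i, φ_j⟩. In particular, orthonormal eigenvectors φ_i of QPQ lying in the range of Q are doubly orthogonal: ⟨φ_i, φ_j⟩ = δ_{ij} and ⟨Pφ_i, Pφ_j⟩ = λ_i δ_{ij}. -/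
open scoped Matrix

namespace Matrix

variable {n R : Type*} [Fintype n] [NonUnitalSemiring R] [StarRing R]

theorem IsHermitian.star_mulVec_dotProduct {A : Matrix n n R} (hA : A.IsHermitian)
    (x y : n → R) : star (A *ᵥ x) ⬝ᵥ y = star x ⬝ᵥ A *ᵥ y := by
  rw [star_mulVec, hA.eq, dotProduct_mulVec]

theorem IsHermitian.star_mulVec_dotProduct_mulVec_of_mul_self {P : Matrix n n R}
    (hP : P.IsHermitian) (hP2 : P * P = P) (x y : n → R) :
    star (P *ᵥ x) ⬝ᵥ P *ᵥ y = star (P *ᵥ x) ⬝ᵥ y := by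
  rw [← hP.star_mulVec_dotProduct, mulVec_mulVec, hP2]

theorem star_mulVec_dotProduct_mulVec_eq_compression {P Q : Matrix n n R}
    (hP : P.IsHermitian) (hQ : Q.IsHermitian) (hP2 : P * P = P) {x y : n → R}
    (hx : Q *ᵥ x = x) (hy : Q *ᵥ y = y) :
    star (P *ᵥ x) ⬝ᵥ P *ᵥ y = star ((Q * P * Q) *ᵥ x) ⬝ᵥ y := by
  calc star (P *ᵥ x) ⬝ᵥ P *ᵥ y
      = star (P *ᵥ Q *ᵥ x) ⬝ᵥ Q *ᵥ y := by
        rw [hP.star_mulVec_dotProduct_mulVec_of_mul_self hP2, hx, hy]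
    _ = star ((Q * P * Q) *ᵥ x) ⬝ᵥ y := by
        rw [← hQ.star_mulVec_dotProduct, mulVec_mulVec, mulVec_mulVec, Matrix.mul_assoc]

end Matrix

theorem stmt15_general (N : ℕ) (P Q : Matrix (Fin N) (Fin N) ℂ)
    (hP : P.IsHermitian) (hQ : Q.IsHermitian) (hP2 : P * P = P)
    (φi φj : Fin N → ℂ) (hi : Q.mulVec φi = φi) (hj : Q.mulVec φj = φj)
    (lam : ℝ) (heig : (Q * P * Q).mulVec φi = (lam : ℂ) • φi) :
    star (P.mulVec φi) ⬝ᵥ P.mulVec φj = (lam : ℂ) * (star φi ⬝ᵥ φj) := by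
  rw [Matrix.star_mulVec_dotProduct_mulVec_eq_compression hP hQ hP2 hi hj, heig, star_smul,
    Complex.star_def, Complex.conj_ofReal, smul_dotProduct, smul_eq_mul]

/-- let `P`, `Q` be orthogonal projections on `ℂ^N`, and suppose
`φ_i, φ_j` satisfy `Qφ_i = φ_i`, `Qφ_j = φ_j` and `QPQφ_i = λ_i φ_i`. Then
`⟨Pφ_i, Pφ_j⟩ = λ_i ⟨φ_i, φ_j⟩` (double orthogonality). -/
theorem stmt15 (N : ℕ) (P Q : Matrix (Fin N) (Fin N) ℂ)
    (hP : P.IsHermitian) (hQ : Q.IsHermitian) (hP2 : P * P = P) (hQ2 : Q * Q = Q)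
    (φi φj : Fin N → ℂ) (hi : Q.mulVec φi = φi) (hj : Q.mulVec φj = φj)
    (lam : ℝ) (heig : (Q * P * Q).mulVec φi = (lam : ℂ) • φi) :
    star (P.mulVec φi) ⬝ᵥ P.mulVec φj = (lam : ℂ) * (star φi ⬝ᵥ φj) :=
  stmt15_general N P Q hP hQ hP2 φi φj hi hj lam heig
end
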